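/- Let M ∈ ℝ^{p×p} be invertible, and suppose vectors θ_n, θ₀ ∈ ℝ^p and Γ_n ∈ ℝ^p satisfy M(θ_n − θ₀) = Γ_n + R_n with ‖R_n‖ ≤ c(‖θ_n − θ₀‖² + δ_n²) for constants c > 0 and δ_n → 0, and additionally ‖θ_n − θ₀‖ → 0 and √n δ_n² → 0 and √n ‖Γ_n‖ = O(1). Then ‖√n(θ_n − θ₀) − M^{-1} √n Γ_n‖ → 0. -/

import Mathlib

/-!
Inverting `M` gives `θ_n - θ₀ = M⁻¹Γ_n + M⁻¹R_n`, so it suffices that `√n ‖R_n‖ → 0`.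
With `a_n = ‖θ_n - θ₀‖` and `K = ‖M⁻¹‖` we have `a_n ≤ K(‖Γ_n‖ + c(a_n² + δ_n²))`; since
`a_n → 0`, eventually `K c a_n ≤ 1/2` and the quadratic term is absorbed:
`a_n ≤ 2K(‖Γ_n‖ + c δ_n²)`. Hence `√n a_n` is bounded, `√n a_n² = a_n · √n a_n → 0`, and
`√n ‖R_n‖ ≤ c(√n a_n² + √n δ_n²) → 0`.
-/

open Filter Matrix Topology

section QuadraticRemainder

variable {ι : Type*} {l : Filter ι} {a γ r d s : ι → ℝ} {K c C : ℝ}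

theorem le_two_mul_of_le_add_mul_sq {a b k : ℝ} (ha : 0 ≤ a) (hka : k * a ≤ 1 / 2)
    (h : a ≤ b + k * a ^ 2) : a ≤ 2 * b := by
  nlinarith

theorem eventually_le_of_le_quadratic_remainder (hK : 0 ≤ K) (ha0 : ∀ i, 0 ≤ a i)
    (ha : Tendsto a l (𝓝 0)) (har : ∀ i, a i ≤ K * (γ i + r i))
    (hr : ∀ i, r i ≤ c * (a i ^ 2 + d i)) :
    ∀ᶠ i in l, a i ≤ 2 * (K * (γ i + c * d i)) := by
  have hsmall : ∀ᶠ i in l, K * c * a i ≤ 1 / 2 :=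
    (by simpa using ha.const_mul (K * c) : Tendsto (fun i => K * c * a i) l (𝓝 0)).eventually
      (eventually_le_nhds (by norm_num))
  filter_upwards [hsmall] with i hi
  refine le_two_mul_of_le_add_mul_sq (ha0 i) hi ?_
  nlinarith [har i, mul_le_mul_of_nonneg_left (hr i) hK]

theorem tendsto_mul_of_le_quadratic_remainder (hK : 0 ≤ K) (ha0 : ∀ i, 0 ≤ a i)
    (ha : Tendsto a l (𝓝 0)) (har : ∀ i, a i ≤ K * (γ i + r i))
    (hr0 : ∀ i, 0 ≤ r i) (hr : ∀ i, r i ≤ c * (a i ^ 2 + d i)) (hs : ∀ i, 0 ≤ s i)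
    (hsγ : ∀ i, s i * γ i ≤ C) (hsd : Tendsto (fun i => s i * d i) l (𝓝 0)) :
    Tendsto (fun i => s i * r i) l (𝓝 0) := by
  have hsa_le : ∀ᶠ i in l, ‖s i * a i‖ ≤ 2 * K * (C + c * (s i * d i)) := by
    filter_upwards [eventually_le_of_le_quadratic_remainder hK ha0 ha har hr] with i hi
    rw [Real.norm_of_nonneg (mul_nonneg (hs i) (ha0 i))]
    nlinarith [mul_le_mul_of_nonneg_left hi (hs i), hsγ i]
  have hsa_bdd : IsBoundedUnder (· ≤ ·) l fun i => ‖s i * a i‖ :=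
    ((hsd.const_mul c).const_add C |>.const_mul (2 * K)).isBoundedUnder_le.mono_le hsa_le
  have hsa2 : Tendsto (fun i => s i * a i ^ 2) l (𝓝 0) := by
    convert ha.zero_mul_isBoundedUnder_le hsa_bdd using 2 with i
    ring
  refine squeeze_zero (fun i => mul_nonneg (hs i) (hr0 i)) (fun i => ?_)
    (by simpa using (hsa2.add hsd).const_mul c)
  nlinarith [mul_le_mul_of_nonneg_left (hr i) (hs i)]

end QuadraticRemainder

theorem tendsto_norm_smul_sub_smul_of_eq_apply_add_remainder {ι E F : Type*} {l : Filter ι}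
    [NormedAddCommGroup E] [NormedSpace ℝ E] [NormedAddCommGroup F] [NormedSpace ℝ F]
    (g : F →L[ℝ] E) {x : ι → E} {Γ R : ι → F} {d s : ι → ℝ} {c C : ℝ}
    (hx : ∀ i, x i = g (Γ i + R i)) (hR : ∀ i, ‖R i‖ ≤ c * (‖x i‖ ^ 2 + d i))
    (hx0 : Tendsto (fun i => ‖x i‖) l (𝓝 0)) (hs : ∀ i, 0 ≤ s i)
    (hsΓ : ∀ i, s i * ‖Γ i‖ ≤ C) (hsd : Tendsto (fun i => s i * d i) l (𝓝 0)) :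
    Tendsto (fun i => ‖s i • x i - s i • g (Γ i)‖) l (𝓝 0) := by
  have hxΓR : ∀ i, ‖x i‖ ≤ ‖g‖ * (‖Γ i‖ + ‖R i‖) := fun i =>
    hx i ▸ (g.le_opNorm _).trans (mul_le_mul_of_nonneg_left (norm_add_le _ _) (norm_nonneg g))
  have hsR : Tendsto (fun i => s i * ‖R i‖) l (𝓝 0) :=
    tendsto_mul_of_le_quadratic_remainder (norm_nonneg g) (fun i => norm_nonneg _) hx0 hxΓR
      (fun i => norm_nonneg _) hR hs hsΓ hsd
  refine squeeze_zero (fun i => norm_nonneg _) (fun i => ?_) (by simpa using hsR.const_mul ‖g‖)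
  calc ‖s i • x i - s i • g (Γ i)‖ = s i * ‖g (R i)‖ := by
        rw [hx i, map_add, ← smul_sub, add_sub_cancel_left, norm_smul,
          Real.norm_of_nonneg (hs i)]
    _ ≤ ‖g‖ * (s i * ‖R i‖) := by nlinarith [g.le_opNorm (R i), hs i]

theorem linearization_perturbation_general
    {p : ℕ} (M : Matrix (Fin p) (Fin p) ℝ) (hM : IsUnit M.det)
    (θn : ℕ → Fin p → ℝ) (θ0 : Fin p → ℝ)
    (Γn Rn : ℕ → Fin p → ℝ)
    (c : ℝ) (δ : ℕ → ℝ)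
    (heq : ∀ n, M *ᵥ (θn n - θ0) = Γn n + Rn n)
    (hRbound : ∀ n, ‖Rn n‖ ≤ c * (‖θn n - θ0‖ ^ 2 + (δ n) ^ 2))
    (hθ : Tendsto (fun n : ℕ => ‖θn n - θ0‖) atTop (nhds 0))
    (hδ2 : Tendsto (fun n : ℕ => Real.sqrt (n : ℝ) * (δ n) ^ 2) atTop (nhds 0))
    (hΓ : ∃ C : ℝ, ∀ n : ℕ, Real.sqrt (n : ℝ) * ‖Γn n‖ ≤ C) :
    Tendsto (fun n : ℕ =>
        ‖(Real.sqrt (n : ℝ)) • (θn n - θ0) - (Real.sqrt (n : ℝ)) • (M⁻¹ *ᵥ Γn n)‖)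
      atTop (nhds 0) := by
  obtain ⟨C, hC⟩ := hΓ
  let g : (Fin p → ℝ) →L[ℝ] Fin p → ℝ := LinearMap.toContinuousLinearMap (M⁻¹).mulVecLin
  have hsolve : ∀ n, θn n - θ0 = g (Γn n + Rn n) := fun n => by
    change θn n - θ0 = M⁻¹ *ᵥ (Γn n + Rn n)
    rw [← heq n, mulVec_mulVec, nonsing_inv_mul M hM, one_mulVec]
  exact tendsto_norm_smul_sub_smul_of_eq_apply_add_remainder g hsolve hRbound hθ
    (fun n => Real.sqrt_nonneg _) hC hδ2

/-- Perturbation lemma for the linearization step: if `M(θ_n - θ₀) = Γ_n + R_n` with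
`‖R_n‖ ≤ c(‖θ_n - θ₀‖² + δ_n²)`, `θ_n → θ₀`, `δ_n → 0`, `√n δ_n² → 0`, and
`√n ‖Γ_n‖ = O(1)`, then `‖√n(θ_n - θ₀) - M⁻¹ √n Γ_n‖ → 0`. -/
theorem linearization_perturbation
    {p : ℕ} (M : Matrix (Fin p) (Fin p) ℝ) (hM : IsUnit M.det)
    (θn : ℕ → Fin p → ℝ) (θ0 : Fin p → ℝ)
    (Γn Rn : ℕ → Fin p → ℝ)
    (c : ℝ) (hc : 0 < c) (δ : ℕ → ℝ)
    (heq : ∀ n, M *ᵥ (θn n - θ0) = Γn n + Rn n)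
    (hRbound : ∀ n, ‖Rn n‖ ≤ c * (‖θn n - θ0‖ ^ 2 + (δ n) ^ 2))
    (hθ : Tendsto (fun n : ℕ => ‖θn n - θ0‖) atTop (nhds 0))
    (hδ : Tendsto δ atTop (nhds 0))
    (hδ2 : Tendsto (fun n : ℕ => Real.sqrt (n : ℝ) * (δ n) ^ 2) atTop (nhds 0))
    (hΓ : ∃ C : ℝ, ∀ n : ℕ, Real.sqrt (n : ℝ) * ‖Γn n‖ ≤ C) :
    Tendsto (fun n : ℕ =>
        ‖(Real.sqrt (n : ℝ)) • (θn n - θ0) - (Real.sqrt (n : ℝ)) • (M⁻¹ *ᵥ Γn n)‖)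
      atTop (nhds 0) :=
  linearization_perturbation_general M hM θn θ0 Γn Rn c δ heq hRbound hθ hδ2 hΓ
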